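/- arXiv:1712.00138 — 4 statements merged into one kernel-verified Lean document; each statement's English description precedes it below -/
import Mathlib

section
/- The only tournament that is a CKI-digraph is the directed 3-cycle C⃗₃, and a tournament is kernel perfect if and only if it is transitive. -/
/-- A kernel of a digraph given by arc relation `A`: an independent and absorbent set. -/
def IsKernel {V : Type} (A : V → V → Prop) (S : Set V) : Prop :=
  (∀ u ∈ S, ∀ v ∈ S, ¬ A u v) ∧ (∀ u, u ∉ S → ∃ v ∈ S, A u v)

def HasKernel {V : Type} (A : V → V → Prop) : Prop := ∃ S, IsKernel A S

/-- The induced subdigraph on a vertex subset `S`. -/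
def Induced {V : Type} (A : V → V → Prop) (S : Set V) : S → S → Prop :=
  fun u v => A u v

/-- Critical kernel imperfect: no kernel, but every proper induced subdigraph has one. -/
def IsCKI {V : Type} (A : V → V → Prop) : Prop :=
  ¬ HasKernel A ∧ ∀ S : Set V, S ≠ Set.univ → HasKernel (Induced A S)

/-- Kernel perfect: every induced subdigraph (including the whole digraph) has a kernel. -/
def IsKP {V : Type} (A : V → V → Prop) : Prop :=
  ∀ S : Set V, HasKernel (Induced A S)

/-- Isomorphism of digraphs. -/
def DigraphIso {V W : Type} (A : V → V → Prop) (B : W → W → Prop) : Prop :=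
  ∃ e : V ≃ W, ∀ u v, A u v ↔ B (e u) (e v)

/-- The circulant digraph on `ZMod m` with connection set `J`. -/
def Circ (m : ℕ) (J : Set (ZMod m)) : ZMod m → ZMod m → Prop :=
  fun i j => j - i ∈ J

/-- The connection set `{1, ±2, ±3, …, ±⌊n/2⌋}`. -/
def Jfull (n : ℕ) : Set (ZMod n) :=
  {j | j = 1 ∨ ∃ k : ℕ, 2 ≤ k ∧ k ≤ n / 2 ∧ (j = (k : ZMod n) ∨ j = -(k : ZMod n))}

/-- The connection set `{2, −3, 4, …, (−1)ⁿ·n}` of `C⃗_{2n+1}(2,−3,…,(−1)ⁿn)`. -/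
def Jalt (n : ℕ) : Set (ZMod (2 * n + 1)) :=
  {j | ∃ k : ℕ, 2 ≤ k ∧ k ≤ n ∧ j = (-1 : ZMod (2 * n + 1)) ^ k * (k : ZMod (2 * n + 1))}

/-- The underlying simple graph of a digraph. -/
def underlying {V : Type} (A : V → V → Prop) : SimpleGraph V where
  Adj u v := u ≠ v ∧ (A u v ∨ A v u)
  symm := ⟨fun _ _ h => ⟨h.1.symm, h.2.symm⟩⟩
  loopless := ⟨fun _ h => h.1 rfl⟩

/-- The clique number of a simple graph. -/
noncomputable def cliqueNum' {W : Type} (G : SimpleGraph W) : ℕ :=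
  sSup {n | ∃ t : Finset W, G.IsNClique n t}

/-- A graph is perfect if each induced subgraph has chromatic number equal to clique number. -/
def IsPerfectGraph {V : Type} (G : SimpleGraph V) : Prop :=
  ∀ S : Set V, (G.induce S).chromaticNumber = (cliqueNum' (G.induce S) : ℕ∞)

def Asymmetric' {V : Type} (A : V → V → Prop) : Prop := ∀ u v, A u v → ¬ A v u

def LocallyInSemicomplete {V : Type} (A : V → V → Prop) : Prop :=
  ∀ v x y, A x v → A y v → x ≠ y → (A x y ∨ A y x)

def LocallyOutSemicomplete {V : Type} (A : V → V → Prop) : Prop :=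
  ∀ v x y, A v x → A v y → x ≠ y → (A x y ∨ A y x)

def QuasiTransitive {V : Type} (A : V → V → Prop) : Prop :=
  ∀ u v w, A u v → A v w → u ≠ w → (A u w ∨ A w u)

def ThreeQuasiTransitive {V : Type} (A : V → V → Prop) : Prop :=
  ∀ u v w x, A u v → A v w → A w x → u ≠ x → (A u x ∨ A x u)

def ArcLocallyInSemicomplete {V : Type} (A : V → V → Prop) : Prop :=
  ∀ u v x y, A u v → A x u → A y v → x ≠ y → (A x y ∨ A y x)

def ArcLocallyOutSemicomplete {V : Type} (A : V → V → Prop) : Prop :=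
  ∀ u v x y, A u v → A u x → A v y → x ≠ y → (A x y ∨ A y x)

/-- 3-anti-quasi-transitive: the endpoints of every anti-directed path on 4 vertices are adjacent. -/
def ThreeAntiQuasiTransitive {V : Type} (A : V → V → Prop) : Prop :=
  ∀ u v w x, u ≠ w → v ≠ x → u ≠ x →
    ((A u v ∧ A w v ∧ A w x) ∨ (A v u ∧ A v w ∧ A x w)) → (A u x ∨ A x u)

def TT3Free {V : Type} (A : V → V → Prop) : Prop :=
  ¬ ∃ u v w, u ≠ v ∧ v ≠ w ∧ u ≠ w ∧ A u v ∧ A v w ∧ A u w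

def IsTournament {V : Type} (A : V → V → Prop) : Prop :=
  (∀ u v, A u v → ¬ A v u) ∧ (∀ u v, u ≠ v → A u v ∨ A v u)

def Converse {V : Type} (A : V → V → Prop) : V → V → Prop := fun u v => A v u

/-- Complete multipartite: non-adjacency is transitive. -/
def CompleteMultipartite {V : Type} (G : SimpleGraph V) : Prop :=
  Transitive (fun u v => ¬ G.Adj u v)

/-- A diagonal of the cycle `c 0, c 1, …, c (N-1), c 0`: an arc of `D` between cycle
vertices which is not an arc of the cycle. -/
def IsDiagonal {V : Type} (A : V → V → Prop) {N : ℕ} [NeZero N] (c : Fin N → V) (i j : Fin N) : Prop :=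
  i ≠ j ∧ j ≠ i + 1 ∧ A (c i) (c j)

/-!
In a tournament two distinct vertices are always joined by an arc, so a kernel is a single vertex
absorbing all others, i.e. a sink. A finite transitive tournament is a strict total order and has a
sink; a non-transitive one contains a directed triangle, and the triangle has no sink. Hence kernel
perfection is transitivity, a CKI-tournament contains a triangle whose vertex set must be
everything, and conversely the proper subtournaments of `C⃗₃` have at most two vertices.
-/

namespace IsTournament

variable {V : Type} {A : V → V → Prop}

lemma irrefl (hT : IsTournament A) (x : V) : ¬ A x x :=
  fun h => hT.1 x x h h

lemma ne_of_arc (hT : IsTournament A) {x y : V} (hxy : A x y) : x ≠ y := by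
  rintro rfl; exact hT.irrefl x hxy

lemma ne_of_arc_arc (hT : IsTournament A) {x y z : V} (hxy : A x y) (hyz : A y z) : x ≠ z := by
  rintro rfl; exact hT.1 x y hxy hyz

lemma induced (hT : IsTournament A) (S : Set V) : IsTournament (Induced A S) :=
  ⟨fun u v h => hT.1 u v h, fun u v huv => hT.2 u v (Subtype.coe_ne_coe.mpr huv)⟩

lemma isKernel_singleton_of_sink (hT : IsTournament A) {v : V} (hv : ∀ u, u ≠ v → A u v) :
    IsKernel A {v} :=
  ⟨by rintro _ rfl _ rfl; exact hT.irrefl _, fun u hu => ⟨v, rfl, hv u hu⟩⟩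

lemma not_hasKernel_of_forall_exists_arc [Nonempty V] (hT : IsTournament A)
    (hout : ∀ v, ∃ w, A v w) : ¬ HasKernel A := by
  rintro ⟨S, hind, habs⟩
  obtain ⟨v, hvS⟩ : ∃ v, v ∈ S := by
    by_contra! hS
    obtain ⟨u⟩ := ‹Nonempty V›
    obtain ⟨s, hs, -⟩ := habs u (hS u)
    exact hS s hs
  obtain ⟨w, hvw⟩ := hout v
  obtain ⟨s, hsS, hws⟩ := habs w (fun hwS => hind v hvS w hwS hvw)
  have hsv : s ≠ v := by rintro rfl; exact hT.1 w s hws hvw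
  rcases hT.2 s v hsv with h | h
  · exact hind s hsS v hvS h
  · exact hind v hvS s hsS h

lemma hasKernel_of_transitive [Finite V] (hT : IsTournament A) (htr : Transitive A) :
    HasKernel A := by
  rcases isEmpty_or_nonempty V with hV | ⟨⟨v₀⟩⟩
  · exact ⟨∅, by simp, fun u => hV.elim u⟩
  have : IsTrans V (flip A) := ⟨fun _ _ _ h₁ h₂ => htr h₂ h₁⟩
  have : Std.Irrefl (flip A) := ⟨hT.irrefl⟩
  obtain ⟨v, -, hv⟩ := (Finite.wellFounded_of_trans_of_irrefl (flip A)).has_min Set.univ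
    ⟨v₀, trivial⟩
  refine ⟨{v}, hT.isKernel_singleton_of_sink fun u hu => ?_⟩
  exact (hT.2 u v hu).resolve_right (hv u trivial)

lemma transitive_of_card_le_two [Fintype V] (hT : IsTournament A) (hcard : Fintype.card V ≤ 2) :
    Transitive A := by
  classical
  intro x y z hxy hyz
  have h3 : ({x, y, z} : Finset V).card = 3 := Finset.card_eq_three.mpr
    ⟨x, y, z, hT.ne_of_arc hxy, hT.ne_of_arc_arc hxy hyz, hT.ne_of_arc hyz, rfl⟩
  have := Finset.card_le_univ ({x, y, z} : Finset V)
  omega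

lemma exists_cycle_of_not_transitive (hT : IsTournament A) (htr : ¬ Transitive A) :
    ∃ x y z, A x y ∧ A y z ∧ A z x := by
  obtain ⟨x, y, z, hxy, hyz, hxz⟩ : ∃ x y z, A x y ∧ A y z ∧ ¬ A x z := by
    by_contra! h
    exact htr fun x y z => h x y z
  exact ⟨x, y, z, hxy, hyz, (hT.2 x z (hT.ne_of_arc_arc hxy hyz)).resolve_left hxz⟩

lemma not_hasKernel_induced_cycle (hT : IsTournament A) {x y z : V}
    (hxy : A x y) (hyz : A y z) (hzx : A z x) : ¬ HasKernel (Induced A {x, y, z}) := by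
  have : Nonempty ({x, y, z} : Set V) := ⟨⟨x, by simp⟩⟩
  refine (hT.induced _).not_hasKernel_of_forall_exists_arc ?_
  rintro ⟨v, hv⟩
  simp only [Set.mem_insert_iff, Set.mem_singleton_iff] at hv
  rcases hv with rfl | rfl | rfl
  exacts [⟨⟨_, by simp⟩, hxy⟩, ⟨⟨_, by simp⟩, hyz⟩, ⟨⟨_, by simp⟩, hzx⟩]

lemma isKP_iff_transitive [Finite V] (hT : IsTournament A) : IsKP A ↔ Transitive A := by
  refine ⟨fun hKP => by_contra fun htr => ?_, fun htr S => ?_⟩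
  · obtain ⟨x, y, z, hxy, hyz, hzx⟩ := hT.exists_cycle_of_not_transitive htr
    exact hT.not_hasKernel_induced_cycle hxy hyz hzx (hKP _)
  · exact (hT.induced S).hasKernel_of_transitive fun _ _ _ h₁ h₂ => htr h₁ h₂

lemma digraphIso_circ_three (hT : IsTournament A) {x y z : V}
    (hxy : A x y) (hyz : A y z) (hzx : A z x) (hcov : ∀ t, t = x ∨ t = y ∨ t = z) :
    DigraphIso A (Circ 3 ({1} : Set (ZMod 3))) := by
  have hxy' := hT.ne_of_arc hxy
  have hyz' := hT.ne_of_arc hyz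
  have hxz' := hT.ne_of_arc_arc hxy hyz
  let f : ZMod 3 → V := ![x, y, z]
  have hf : Function.Bijective f := by
    refine ⟨fun i j hij => ?_, fun t => ?_⟩
    · fin_cases i <;> fin_cases j <;> simp_all [f, eq_comm] <;> rfl
    · rcases hcov t with rfl | rfl | rfl
      exacts [⟨0, rfl⟩, ⟨1, rfl⟩, ⟨2, rfl⟩]
  refine ⟨(Equiv.ofBijective f hf).symm, fun u v => ?_⟩
  obtain ⟨i, rfl⟩ := hf.2 u
  obtain ⟨j, rfl⟩ := hf.2 v
  simp only [Equiv.ofBijective_symm_apply_apply, Circ, Set.mem_singleton_iff]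
  fin_cases i <;> fin_cases j <;> simp [f, hxy, hyz, hzx, hT.irrefl, hT.1 _ _ hxy, hT.1 _ _ hyz,
    hT.1 _ _ hzx] <;> decide

end IsTournament

/-- the unique CKI-tournament is `C⃗₃`, and a tournament is KP iff transitive. -/
theorem stmt5 {V : Type} [Fintype V] (A : V → V → Prop) (hT : IsTournament A) :
    (IsCKI A ↔ DigraphIso A (Circ 3 ({1} : Set (ZMod 3)))) ∧
    (IsKP A ↔ Transitive A) := by
  refine ⟨⟨fun ⟨hnk, hsub⟩ => ?_, fun ⟨e, he⟩ => ⟨?_, fun S hS => ?_⟩⟩,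
    hT.isKP_iff_transitive⟩
  · obtain ⟨x, y, z, hxy, hyz, hzx⟩ :=
      hT.exists_cycle_of_not_transitive fun htr => hnk (hT.hasKernel_of_transitive htr)
    have hcov : ({x, y, z} : Set V) = Set.univ :=
      by_contra fun hne => hT.not_hasKernel_induced_cycle hxy hyz hzx (hsub _ hne)
    refine hT.digraphIso_circ_three hxy hyz hzx fun t => ?_
    have ht : t ∈ ({x, y, z} : Set V) := hcov ▸ Set.mem_univ t
    simpa using ht
  · have : Nonempty V := ⟨e.symm 0⟩
    exact hT.not_hasKernel_of_forall_exists_arc fun v => ⟨e.symm (e v + 1), by simp [he, Circ]⟩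
  · classical
    obtain ⟨w, hw⟩ := (Set.ne_univ_iff_exists_notMem S).1 hS
    have hlt : Fintype.card S < Fintype.card V := Fintype.card_subtype_lt hw
    have h3 : Fintype.card V = 3 := by rw [Fintype.card_congr e, ZMod.card]
    have hS2 : Fintype.card S ≤ 2 := by omega
    exact (hT.induced S).hasKernel_of_transitive ((hT.induced S).transitive_of_card_le_two hS2)
end

section
/- Every bipartite tournament is kernel perfect: every induced subdigraph of an orientation of a complete bipartite graph has a kernel. -/
/-! If the side `X` absorbs every other vertex, it is a kernel, since no arc lies inside a side.
Otherwise some `y ∉ X` has no out-neighbour in `X`; by completeness every vertex of `X` then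
points to `y`, so the other side is a kernel. Induced subdigraphs of bipartite tournaments are
again bipartite tournaments, which gives kernel perfectness. -/

def ArcsCross {V : Type} (A : V → V → Prop) (X : Set V) : Prop :=
  ∀ u v, A u v → ((u ∈ X ∧ v ∉ X) ∨ (u ∉ X ∧ v ∈ X))

namespace ArcsCross

variable {V : Type} {A : V → V → Prop} {X : Set V}

theorem not_adj_of_mem (h : ArcsCross A X) {u v : V} (hu : u ∈ X) (hv : v ∈ X) : ¬ A u v :=
  fun huv => by rcases h u v huv with ⟨-, hv'⟩ | ⟨hu', -⟩ <;> contradiction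

theorem compl (h : ArcsCross A X) : ArcsCross A Xᶜ := by
  intro u v huv
  simp only [Set.mem_compl_iff, not_not]
  exact (h u v huv).symm

theorem isKernel (h : ArcsCross A X) (habsorb : ∀ u, u ∉ X → ∃ v ∈ X, A u v) :
    IsKernel A X :=
  ⟨fun _ hu _ hv => h.not_adj_of_mem hu hv, habsorb⟩

theorem induced (h : ArcsCross A X) (S : Set V) :
    ArcsCross (Induced A S) (Subtype.val ⁻¹' X) :=
  fun u v huv => h u v huv

theorem hasKernel (h : ArcsCross A X) (hcomplete : ∀ u ∈ X, ∀ v, v ∉ X → (A u v ∨ A v u)) :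
    HasKernel A := by
  by_cases habsorb : ∀ u, u ∉ X → ∃ v ∈ X, A u v
  · exact ⟨X, h.isKernel habsorb⟩
  push Not at habsorb
  obtain ⟨y, hyX, hy⟩ := habsorb
  refine ⟨Xᶜ, h.compl.isKernel fun u hu => ⟨y, hyX, ?_⟩⟩
  rw [Set.notMem_compl_iff] at hu
  exact (hcomplete u hu y hyX).resolve_right (hy u hu)

end ArcsCross

theorem stmt6_general {V : Type} (A : V → V → Prop) (X : Set V)
    (hcross : ∀ u v, A u v → ((u ∈ X ∧ v ∉ X) ∨ (u ∉ X ∧ v ∈ X)))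
    (hcomplete : ∀ u ∈ X, ∀ v, v ∉ X → (A u v ∨ A v u)) :
    IsKP A := fun S =>
  ArcsCross.hasKernel (ArcsCross.induced hcross S) fun u hu v hv => hcomplete u hu v hv

/-- bipartite tournaments are kernel perfect. -/
theorem stmt6 {V : Type} [Fintype V] (A : V → V → Prop) (X : Set V)
    (hasym : ∀ u v, A u v → ¬ A v u)
    (hcross : ∀ u v, A u v → ((u ∈ X ∧ v ∉ X) ∨ (u ∉ X ∧ v ∈ X)))
    (hcomplete : ∀ u ∈ X, ∀ v, v ∉ X → (A u v ∨ A v u)) :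
    IsKP A :=
  stmt6_general A X hcross hcomplete
end

section
/- The unique asymmetric 3-quasi-transitive CKI-digraph is the directed 3-cycle C⃗₃. -/
/-! Every vertex `x` of an asymmetric 3-quasi-transitive CKI-digraph `D` lies on a directed
triangle: a kernel `K` of `D - x` must receive an arc `k → x` (else `K ∪ {x}` is a kernel of `D`),
and any out-neighbour `y` of `x` is absorbed by some `t ∈ K`; the path `k → x → y → t` forces
`t = k`, so `x → y → k → x`. By asymmetry this triangle induces `C⃗₃`, which has no kernel, so by
criticality it is all of `D`. -/

theorem hasKernel_induced_iff {V : Type} (A : V → V → Prop) (S : Set V) :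
    HasKernel (Induced A S) ↔
      ∃ K : Set V, K ⊆ S ∧ (∀ u ∈ K, ∀ v ∈ K, ¬ A u v) ∧
        (∀ u ∈ S, u ∉ K → ∃ s ∈ K, A u s) := by
  constructor
  · rintro ⟨T, hTi, hTa⟩
    refine ⟨Subtype.val '' T, Subtype.coe_image_subset S T, ?_, ?_⟩
    · rintro _ ⟨x, hx, rfl⟩ _ ⟨y, hy, rfl⟩
      exact hTi x hx y hy
    · intro u hu huK
      obtain ⟨v, hv, hav⟩ := hTa ⟨u, hu⟩ fun h => huK ⟨⟨u, hu⟩, h, rfl⟩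
      exact ⟨v, ⟨v, hv, rfl⟩, hav⟩
  · rintro ⟨K, hKS, hKi, hKa⟩
    refine ⟨{x : S | x.val ∈ K}, fun u hu v hv => hKi u hu v hv, fun u hu => ?_⟩
    obtain ⟨s, hs, has⟩ := hKa u u.property hu
    exact ⟨⟨s, hKS hs⟩, hs, has⟩

section Kernels

variable {V : Type} {A : V → V → Prop}

theorem isKernel_insert {K : Set V} {x : V} (hxx : ¬ A x x) (hKi : ∀ u ∈ K, ∀ v ∈ K, ¬ A u v)
    (hxK : ∀ s ∈ K, ¬ A x s) (hKx : ∀ s ∈ K, ¬ A s x)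
    (hKa : ∀ u, u ≠ x → u ∉ K → A u x ∨ ∃ s ∈ K, A u s) :
    IsKernel A (insert x K) := by
  refine ⟨?_, fun u hu => ?_⟩
  · rintro u (rfl | hu) v (rfl | hv)
    exacts [hxx, hxK v hv, hKx u hu, hKi u hu v hv]
  · rw [Set.mem_insert_iff, not_or] at hu
    rcases hKa u hu.1 hu.2 with hux | ⟨s, hs, hus⟩
    exacts [⟨x, Set.mem_insert x K, hux⟩, ⟨s, Set.mem_insert_of_mem x hs, hus⟩]

theorem mem_iff_notMem_of_unique_out_arc {S K : Set V} (hKS : K ⊆ S)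
    (hKi : ∀ u ∈ K, ∀ v ∈ K, ¬ A u v) (hKa : ∀ u ∈ S, u ∉ K → ∃ s ∈ K, A u s)
    {a b : V} (ha : a ∈ S) (hab : A a b) (hout : ∀ c ∈ S, A a c → c = b) :
    a ∈ K ↔ b ∉ K := by
  refine ⟨fun haK hbK => hKi a haK b hbK hab, fun hbK => by_contra fun haK => hbK ?_⟩
  obtain ⟨s, hs, has⟩ := hKa a ha haK
  rwa [← hout s (hKS hs) has]

end Kernels

namespace IsCKI

variable {V : Type} {A : V → V → Prop}

theorem eq_univ_of_not_hasKernel_induced (hck : IsCKI A) {S : Set V}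
    (hS : ¬ HasKernel (Induced A S)) : S = Set.univ :=
  by_contra fun hne => hS (hck.2 S hne)

theorem nonempty (hck : IsCKI A) : Nonempty V := by
  by_contra h
  rw [not_nonempty_iff] at h
  exact hck.1 ⟨∅, fun u hu => hu.elim, fun u => isEmptyElim u⟩

theorem exists_arc (hck : IsCKI A) (x : V) : ∃ y, A x y := by
  by_contra! hx
  have hS : {u | u ≠ x ∧ ¬ A u x} ≠ Set.univ := fun h => (Set.eq_univ_iff_forall.1 h x).1 rfl
  obtain ⟨K, hKS, hKi, hKa⟩ := (hasKernel_induced_iff A _).1 (hck.2 _ hS)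
  refine hck.1 ⟨insert x K, isKernel_insert (hx x) hKi (fun s _ => hx s)
    (fun s hs => (hKS hs).2) fun u hux huK => ?_⟩
  by_cases hu : A u x
  exacts [Or.inl hu, Or.inr (hKa u ⟨hux, hu⟩ huK)]

theorem exists_threeCycle (hck : IsCKI A) (ha : Asymmetric' A) (h3 : ThreeQuasiTransitive A)
    (x : V) : ∃ y z, A x y ∧ A y z ∧ A z x := by
  have hloop : ∀ z, ¬ A z z := fun z h => ha z z h h
  have hS : ({x}ᶜ : Set V) ≠ Set.univ := fun h => Set.eq_univ_iff_forall.1 h x rfl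
  obtain ⟨K, hKS, hKi, hKa⟩ := (hasKernel_induced_iff A _).1 (hck.2 _ hS)
  have hKa' : ∀ u, u ≠ x → u ∉ K → ∃ s ∈ K, A u s := fun u hux => hKa u hux
  have hxK : ∀ s ∈ K, ¬ A x s := by
    refine fun s hs hxs => hck.1 ⟨K, hKi, fun u huK => ?_⟩
    by_cases hux : u = x
    exacts [⟨s, hs, hux ▸ hxs⟩, hKa' u hux huK]
  obtain ⟨z, hzK, hzx⟩ : ∃ z ∈ K, A z x := by
    by_contra! hKx
    exact hck.1 ⟨insert x K, isKernel_insert (hloop x) hKi hxK hKx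
      fun u hux huK => Or.inr (hKa' u hux huK)⟩
  obtain ⟨y, hxy⟩ := hck.exists_arc x
  obtain ⟨t, htK, hyt⟩ := hKa' y (fun h => hloop x (h ▸ hxy)) fun hyK => hxK y hyK hxy
  have hzt : z = t := by
    by_contra hzt
    rcases h3 z x y t hzx hxy hyt hzt with h | h
    exacts [hKi z hzK t htK h, hKi t htK z hzK h]
  exact ⟨y, z, hxy, hzt ▸ hyt, hzx⟩

end IsCKI

section ThreeCycle

variable {V : Type} {A : V → V → Prop} {u v w : V}

theorem not_hasKernel_induced_of_threeCycle (ha : Asymmetric' A)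
    (huv : A u v) (hvw : A v w) (hwu : A w u) : ¬ HasKernel (Induced A {u, v, w}) := by
  rw [hasKernel_induced_iff]
  rintro ⟨K, hKS, hKi, hKa⟩
  have hloop : ∀ z, ¬ A z z := fun z h => ha z z h h
  have hu : u ∈ K ↔ v ∉ K := mem_iff_notMem_of_unique_out_arc hKS hKi hKa (by simp) huv <| by
    rintro c (rfl | rfl | rfl) h
    exacts [(hloop _ h).elim, rfl, (ha _ _ hwu h).elim]
  have hv : v ∈ K ↔ w ∉ K := mem_iff_notMem_of_unique_out_arc hKS hKi hKa (by simp) hvw <| by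
    rintro c (rfl | rfl | rfl) h
    exacts [(ha _ _ huv h).elim, (hloop _ h).elim, rfl]
  have hw : w ∈ K ↔ u ∉ K := mem_iff_notMem_of_unique_out_arc hKS hKi hKa (by simp) hwu <| by
    rintro c (rfl | rfl | rfl) h
    exacts [rfl, (ha _ _ hvw h).elim, (hloop _ h).elim]
  tauto

theorem hasKernel_induced_of_threeCycle_of_notMem (ha : Asymmetric' A) (hvw : A v w)
    (hcover : ({u, v, w} : Set V) = Set.univ) {S : Set V} (hu : u ∉ S) :
    HasKernel (Induced A S) := by
  have hloop : ∀ z, ¬ A z z := fun z h => ha z z h h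
  have hS : ∀ x ∈ S, x = v ∨ x = w := fun x hx => by
    have := hcover ▸ Set.mem_univ x
    simp only [Set.mem_insert_iff, Set.mem_singleton_iff] at this
    rcases this with rfl | h
    exacts [(hu hx).elim, h]
  rw [hasKernel_induced_iff]
  by_cases hw : w ∈ S
  · refine ⟨{w}, Set.singleton_subset_iff.2 hw, ?_, fun x hx hxw => ⟨w, rfl, ?_⟩⟩
    · rintro x rfl y rfl
      exact hloop _
    · rcases hS x hx with rfl | rfl
      exacts [hvw, (hxw rfl).elim]
  · refine ⟨S, subset_rfl, fun x hx y hy => ?_, fun x hx hxS => (hxS hx).elim⟩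
    rw [(hS x hx).resolve_right (by rintro rfl; exact hw hx),
      (hS y hy).resolve_right (by rintro rfl; exact hw hy)]
    exact hloop v

theorem isCKI_of_threeCycle (ha : Asymmetric' A) (huv : A u v) (hvw : A v w) (hwu : A w u)
    (hcover : ({u, v, w} : Set V) = Set.univ) : IsCKI A := by
  refine ⟨fun ⟨K, hKi, hKa⟩ => not_hasKernel_induced_of_threeCycle ha huv hvw hwu ?_,
    fun S hS => ?_⟩
  · rw [hasKernel_induced_iff]
    exact ⟨K, hcover ▸ Set.subset_univ K, hKi, fun x _ hx => hKa x hx⟩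
  · obtain ⟨x, hx⟩ := (Set.ne_univ_iff_exists_notMem S).1 hS
    have hx' := hcover ▸ Set.mem_univ x
    simp only [Set.mem_insert_iff, Set.mem_singleton_iff] at hx'
    rcases hx' with rfl | rfl | rfl
    · exact hasKernel_induced_of_threeCycle_of_notMem ha hvw hcover hx
    · exact hasKernel_induced_of_threeCycle_of_notMem ha hwu
        (by rw [← hcover]; ext; simp only [Set.mem_insert_iff, Set.mem_singleton_iff]; tauto) hx
    · exact hasKernel_induced_of_threeCycle_of_notMem ha huv
        (by rw [← hcover]; ext; simp only [Set.mem_insert_iff, Set.mem_singleton_iff]; tauto) hx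

end ThreeCycle

theorem circ_three_one_iff (i j : ZMod 3) : Circ 3 {1} i j ↔ j = i + 1 := by
  rw [Circ, Set.mem_singleton_iff, sub_eq_iff_eq_add, add_comm]

theorem ZMod.three_cases (i : ZMod 3) : i = 0 ∨ i = 1 ∨ i = 2 := by
  revert i
  decide

theorem digraphIso_circ_of_threeCycle {V : Type} {A : V → V → Prop} {u v w : V}
    (ha : Asymmetric' A) (huv : A u v) (hvw : A v w) (hwu : A w u)
    (hcover : ({u, v, w} : Set V) = Set.univ) : DigraphIso A (Circ 3 {1}) := by
  have hloop : ∀ z, ¬ A z z := fun z h => ha z z h h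
  have huv' : u ≠ v := fun h => hloop u (h ▸ huv)
  have hvw' : v ≠ w := fun h => hloop v (h ▸ hvw)
  have hwu' : w ≠ u := fun h => hloop w (h ▸ hwu)
  let f : ZMod 3 → V := ![u, v, w]
  have hf : Function.Bijective f := by
    refine ⟨fun i j hij => ?_, fun x => ?_⟩
    · rcases ZMod.three_cases i with rfl | rfl | rfl <;>
        rcases ZMod.three_cases j with rfl | rfl | rfl <;>
        simp_all [f, eq_comm]
    · have hx := hcover ▸ Set.mem_univ x
      simp only [Set.mem_insert_iff, Set.mem_singleton_iff] at hx
      rcases hx with rfl | rfl | rfl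
      exacts [⟨0, rfl⟩, ⟨1, rfl⟩, ⟨2, rfl⟩]
  have hA : ∀ i j, A (f i) (f j) ↔ j = i + 1 := by
    intro i j
    rcases ZMod.three_cases i with rfl | rfl | rfl <;>
      rcases ZMod.three_cases j with rfl | rfl | rfl <;>
      simp [f, huv, hvw, hwu, hloop, ha _ _ huv, ha _ _ hvw, ha _ _ hwu] <;> decide
  let e := Equiv.ofBijective f hf
  refine ⟨e.symm, fun x y => ?_⟩
  obtain ⟨i, rfl⟩ := e.surjective x
  obtain ⟨j, rfl⟩ := e.surjective y
  rw [Equiv.symm_apply_apply, Equiv.symm_apply_apply, circ_three_one_iff]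
  exact hA i j

theorem stmt17_general {V : Type} (A : V → V → Prop)
    (ha : Asymmetric' A) (h3 : ThreeQuasiTransitive A) :
    IsCKI A ↔ DigraphIso A (Circ 3 ({1} : Set (ZMod 3))) := by
  constructor
  · intro hck
    obtain ⟨x⟩ := hck.nonempty
    obtain ⟨y, z, hxy, hyz, hzx⟩ := hck.exists_threeCycle ha h3 x
    exact digraphIso_circ_of_threeCycle ha hxy hyz hzx
      (hck.eq_univ_of_not_hasKernel_induced (not_hasKernel_induced_of_threeCycle ha hxy hyz hzx))
  · rintro ⟨e, he⟩
    have harc : ∀ i j, j = i + 1 → A (e.symm i) (e.symm j) := fun i j hij => by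
      rwa [he, Equiv.apply_symm_apply, Equiv.apply_symm_apply, circ_three_one_iff]
    refine isCKI_of_threeCycle ha (harc 0 1 rfl) (harc 1 2 rfl) (harc 2 0 rfl)
      (Set.eq_univ_of_forall fun x => ?_)
    obtain ⟨i, rfl⟩ := e.symm.surjective x
    rcases ZMod.three_cases i with rfl | rfl | rfl <;> simp

/-- the unique asymmetric 3-quasi-transitive CKI-digraph is `C⃗₃`. -/
theorem stmt17 {V : Type} [Fintype V] (A : V → V → Prop)
    (ha : Asymmetric' A) (h3 : ThreeQuasiTransitive A) :
    IsCKI A ↔ DigraphIso A (Circ 3 ({1} : Set (ZMod 3))) :=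
  stmt17_general A ha h3
end

section
/- An asymmetric 3-quasi-transitive digraph is kernel perfect if and only if it has no induced C⃗₃; an asymmetric arc-locally in-semicomplete digraph, asymmetric arc-locally out-semicomplete digraph, or asymmetric 3-anti-quasi-transitive TT₃-free digraph is kernel perfect if and only if it has no induced directed odd cycle. -/
section Walks

variable {V : Type} {A : V → V → Prop}

def WalkLen (A : V → V → Prop) : ℕ → V → V → Prop
  | 0, u, v => u = v
  | n + 1, u, v => ∃ x, A u x ∧ WalkLen A n x v

theorem WalkLen.single {u v : V} (h : A u v) : WalkLen A 1 u v := ⟨v, h, rfl⟩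

theorem WalkLen.trans {k l : ℕ} {u v x : V} (h₁ : WalkLen A k u v) (h₂ : WalkLen A l v x) :
    WalkLen A (k + l) u x := by
  induction k generalizing u with
  | zero => cases h₁; simpa using h₂
  | succ k ih =>
    obtain ⟨y, hy, h⟩ := h₁
    rw [Nat.add_right_comm]
    exact ⟨y, hy, ih h⟩

theorem WalkLen.map {W : Type} {B : W → W → Prop} {f : W → V}
    (hf : ∀ a b, B a b → A (f a) (f b)) {k : ℕ} {u v : W} (h : WalkLen B k u v) :
    WalkLen A k (f u) (f v) := by
  induction k generalizing u with
  | zero => exact congrArg f h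
  | succ k ih =>
    obtain ⟨x, hx, h⟩ := h
    exact ⟨f x, hf _ _ hx, ih h⟩

theorem WalkLen.exists_fun {k : ℕ} {u v : V} (h : WalkLen A k u v) :
    ∃ f : ℕ → V, f 0 = u ∧ f k = v ∧ ∀ i < k, A (f i) (f (i + 1)) := by
  induction k generalizing u with
  | zero => exact ⟨fun _ => u, rfl, h, by simp⟩
  | succ k ih =>
    obtain ⟨x, hux, hx⟩ := h
    obtain ⟨f, hf0, hfk, hf⟩ := ih hx
    refine ⟨fun | 0 => u | i + 1 => f i, rfl, hfk, ?_⟩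
    rintro (_ | i) hi
    · simpa [hf0] using hux
    · exact hf i (by omega)

theorem WalkLen.exists_cycle {m : ℕ} [NeZero m] {u : V} (h : WalkLen A m u u) :
    ∃ w : ZMod m → V, ∀ i, A (w i) (w (i + 1)) := by
  obtain ⟨f, hf0, hfm, hf⟩ := h.exists_fun
  refine ⟨fun i => f i.val, fun i => ?_⟩
  have hi := ZMod.val_lt i
  have hcast : i + 1 = ((i.val + 1 : ℕ) : ZMod m) := by push_cast; rw [ZMod.natCast_zmod_val]
  rcases Nat.lt_or_ge (i.val + 1) m with hlt | hge
  · simpa only [hcast, ZMod.val_cast_of_lt hlt] using hf _ hi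
  · have heq : i.val + 1 = m := by omega
    have : (i + 1).val = 0 := by rw [hcast, heq, ZMod.natCast_self, ZMod.val_zero]
    simpa only [this, hf0, ← hfm, ← heq] using hf _ hi

theorem WalkLen.of_induced {S : Set V} {k : ℕ} {u v : S} (h : WalkLen (Induced A S) k u v) :
    WalkLen A k u v :=
  h.map (f := Subtype.val) fun _ _ => id

theorem walkLen_of_forall_adj_add {m : ℕ} {w : ZMod m → V} {c : ZMod m}
    (h : ∀ i, A (w i) (w (i + c))) (t : ℕ) (i : ZMod m) :
    WalkLen A t (w i) (w (i + t * c)) := by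
  induction t generalizing i with
  | zero => simp [WalkLen]
  | succ t ih =>
    refine ⟨w (i + c), h i, ?_⟩
    convert ih (i + c) using 2
    push_cast
    ring

end Walks

section Kernels

variable {V : Type} {A : V → V → Prop}

theorem HasKernel.of_digraphIso {W : Type} {B : W → W → Prop} (hA : HasKernel A)
    (h : DigraphIso A B) : HasKernel B := by
  obtain ⟨e, he⟩ := h
  obtain ⟨S, hind, habs⟩ := hA
  refine ⟨e '' S, ?_, fun u hu => ?_⟩
  · rintro _ ⟨a, ha, rfl⟩ _ ⟨b, hb, rfl⟩ hab
    exact hind a ha b hb ((he a b).mpr hab)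
  · obtain ⟨v, hv, huv⟩ := habs (e.symm u) fun h => hu ⟨_, h, e.apply_symm_apply u⟩
    exact ⟨e v, ⟨v, hv, rfl⟩, by simpa using (he _ v).mp huv⟩

theorem not_hasKernel_circ {m : ℕ} (hm : Odd m) : ¬ HasKernel (Circ m ({1} : Set (ZMod m))) := by
  rintro ⟨S, hind, habs⟩
  have hsucc : ∀ x : ZMod m, x + 1 ∈ S ↔ x ∉ S := by
    intro x
    refine ⟨fun h hx => hind x hx _ h (by simp [Circ]), fun hx => ?_⟩
    obtain ⟨v, hv, hxv⟩ := habs x hx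
    rwa [show v = x + 1 from eq_add_of_sub_eq' hxv] at hv
  have hpar : ∀ k : ℕ, (k : ZMod m) ∈ S ↔ (Even k ↔ (0 : ZMod m) ∈ S) := by
    intro k
    induction k with
    | zero => simp
    | succ k ih => rw [Nat.cast_succ, hsucc, ih, Nat.even_add_one]; tauto
  have := hpar m
  rw [ZMod.natCast_self] at this
  exact Nat.not_even_iff_odd.mpr hm (by tauto)

def IsSemikernel (A : V → V → Prop) (S : Set V) : Prop :=
  (∀ u ∈ S, ∀ v ∈ S, ¬ A u v) ∧ ∀ u ∈ S, ∀ v, A u v → ∃ x ∈ S, A v x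

theorem IsSemikernel.hasKernel {S : Set V} (hS : IsSemikernel A S)
    (hR : HasKernel (Induced A {v | v ∉ S ∧ ∀ x ∈ S, ¬ A v x})) : HasKernel A := by
  obtain ⟨K, hKind, hKabs⟩ := hR
  refine ⟨S ∪ Subtype.val '' K, ?_, fun u hu => ?_⟩
  · rintro u (hu | ⟨u, hu, rfl⟩) v (hv | ⟨v, hv, rfl⟩) huv
    · exact hS.1 u hu v hv huv
    · obtain ⟨x, hx, hvx⟩ := hS.2 u hu v huv
      exact v.2.2 x hx hvx
    · exact u.2.2 v hv huv
    · exact hKind u hu v hv huv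
  · by_cases hx : ∃ x ∈ S, A u x
    · obtain ⟨x, hx, hux⟩ := hx
      exact ⟨x, .inl hx, hux⟩
    push Not at hx
    have huR : u ∉ S ∧ ∀ x ∈ S, ¬ A u x := ⟨fun h => hu (.inl h), hx⟩
    obtain ⟨v, hv, huv⟩ := hKabs ⟨u, huR⟩ fun h => hu (.inr ⟨_, h, rfl⟩)
    exact ⟨v, .inr ⟨v, hv, rfl⟩, huv⟩

theorem exists_isSemikernel [Finite V] [Nonempty V]
    (h : ∀ k u, Odd k → ¬ WalkLen A k u u) : ∃ S, S.Nonempty ∧ IsSemikernel A S := by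
  obtain ⟨u₀, -, hmin⟩ := Set.finite_univ.exists_minimalFor
    (fun u => {v | ∃ k, WalkLen A k u v}) Set.univ Set.univ_nonempty
  have back : ∀ {k v}, WalkLen A k u₀ v → ∃ t, WalkLen A t v u₀ := by
    intro k v hv
    exact hmin trivial (fun x ⟨l, hl⟩ => ⟨k + l, hv.trans hl⟩) ⟨0, rfl⟩
  have closed_even : ∀ {k v t}, WalkLen A k u₀ v → WalkLen A t v u₀ → Even (k + t) :=
    fun hk ht => Nat.not_odd_iff_even.mp fun ho => h _ _ ho (hk.trans ht)
  have hparity : ∀ {k l v}, WalkLen A k u₀ v → WalkLen A l u₀ v → Even (k + l) := by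
    intro k l v hk hl
    obtain ⟨t, ht⟩ := back hk
    have h₁ := closed_even hk ht
    have h₂ := closed_even hl ht
    rw [Nat.even_add] at *
    tauto
  set S := {v | ∃ k, Even k ∧ WalkLen A k u₀ v}
  have hS : ∀ u ∈ S, ∀ v ∈ S, ¬ A u v := by
    rintro u ⟨k, hk, hu⟩ v ⟨l, hl, hv⟩ huv
    have := hparity (hu.trans (.single huv)) hv
    rw [Nat.even_add, Nat.even_add_one] at this
    tauto
  refine ⟨S, ⟨u₀, 0, Even.zero, rfl⟩, hS, ?_⟩
  rintro u ⟨k, hk, hu⟩ v huv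
  obtain ⟨_ | t, ht⟩ := back (hu.trans (.single huv))
  · exact absurd huv (hS u ⟨k, hk, hu⟩ v ⟨0, Even.zero, ht.symm⟩)
  · obtain ⟨x, hvx, -⟩ := ht
    exact ⟨x, ⟨k + 1 + 1, by simpa [Nat.even_add_one] using hk,
      (hu.trans (.single huv)).trans (.single hvx)⟩, hvx⟩

theorem hasKernel_of_forall_odd_not_walkLen [Finite V]
    (h : ∀ k u, Odd k → ¬ WalkLen A k u u) : HasKernel A := by
  induction hn : Nat.card V using Nat.strong_induction_on generalizing V with
  | _ n ih =>
  cases isEmpty_or_nonempty V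
  · exact ⟨∅, by simp, fun u => isEmptyElim u⟩
  obtain ⟨S, ⟨u₀, hu₀⟩, hS⟩ := exists_isSemikernel h
  refine hS.hasKernel (ih _ ?_ (fun k u hk hu => h k u hk hu.of_induced) rfl)
  exact hn ▸ Finite.card_subtype_lt (x := u₀) fun hu => hu.1 hu₀

theorem isKP_of_forall_odd_not_walkLen [Finite V]
    (h : ∀ k u, Odd k → ¬ WalkLen A k u u) : IsKP A := fun _ =>
  hasKernel_of_forall_odd_not_walkLen fun k u hk hu => h k u hk hu.of_induced

theorem not_isKP_of_digraphIso_circ {S : Set V} {m : ℕ} (hm : Odd m)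
    (h : DigraphIso (Induced A S) (Circ m ({1} : Set (ZMod m)))) : ¬ IsKP A :=
  fun hkp => not_hasKernel_circ hm ((hkp S).of_digraphIso h)

end Kernels

section MinOddCycle

variable {V : Type} {A : V → V → Prop} {m : ℕ} {w : ZMod m → V}

structure IsMinOddCycle (A : V → V → Prop) (m : ℕ) (w : ZMod m → V) : Prop where
  odd : Odd m
  adj : ∀ i, A (w i) (w (i + 1))
  min : ∀ l u, Odd l → l < m → ¬ WalkLen A l u u

theorem exists_isMinOddCycle (h : ∃ k u, Odd k ∧ WalkLen A k u u) :
    ∃ m, ∃ w : ZMod m → V, IsMinOddCycle A m w := by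
  classical
  obtain ⟨u, hodd, hu⟩ := Nat.find_spec h
  have : NeZero (Nat.find h) := ⟨hodd.pos.ne'⟩
  obtain ⟨w, hw⟩ := hu.exists_cycle
  exact ⟨_, w, hodd, hw, fun l x hl hlt hx => Nat.find_min h hlt ⟨x, hl, hx⟩⟩

def HasChord (A : V → V → Prop) (w : ZMod m → V) (e : ℕ) : Prop :=
  ∃ a, A (w a) (w (a + e))

theorem hasChord_of_adj {a b : ZMod m} {e : ℕ} (h : A (w a) (w b)) (hb : b = a + e) :
    HasChord A w e :=
  ⟨a, hb ▸ h⟩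

theorem not_hasChord_of_step (base : ¬ HasChord A w 2)
    (step : ∀ e, Even e → 0 < e → e + 2 < m → HasChord A w (e + 2) → HasChord A w e)
    {e : ℕ} (he : Even e) (h2 : 2 ≤ e) (hem : e < m) : ¬ HasChord A w e := by
  obtain ⟨k, rfl⟩ : ∃ k, e = 2 * k + 2 := ⟨e / 2 - 1, by obtain ⟨r, rfl⟩ := he; omega⟩
  clear he h2
  induction k with
  | zero => exact base
  | succ k ih =>
    intro hc
    exact ih (by omega) (step _ ⟨k + 1, by ring⟩ (by omega) (by omega) hc)

namespace IsMinOddCycle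

theorem neZero (hw : IsMinOddCycle A m w) : NeZero m := ⟨hw.odd.pos.ne'⟩

theorem adj_of_eq (hw : IsMinOddCycle A m w) {i j : ZMod m} (h : j = i + 1) : A (w i) (w j) :=
  h ▸ hw.adj i

theorem walkLen (hw : IsMinOddCycle A m w) (t : ℕ) (i : ZMod m) :
    WalkLen A t (w i) (w (i + t)) := by
  simpa using walkLen_of_forall_adj_add hw.adj t i

theorem false_of_walkLen (hw : IsMinOddCycle A m w) {a b : ZMod m} {j r : ℕ}
    (h : WalkLen A j (w a) (w b)) (hba : b + r = a) (hodd : Odd (j + r)) (hlt : j + r < m) :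
    False :=
  hw.min _ _ hodd hlt (h.trans (hba ▸ hw.walkLen r b))

theorem not_adj_of_eq (hw : IsMinOddCycle A m w) {d : ℕ} (hd : Even d) (hdm : d + 1 < m)
    {i j : ZMod m} (h : j = i + d) : ¬ A (w j) (w i) := fun hji =>
  hw.false_of_walkLen (.single hji) h.symm (by rw [add_comm]; exact hd.add_one) (by omega)

theorem injective (hw : IsMinOddCycle A m w) : Function.Injective w := by
  have := hw.neZero
  intro i j hij
  by_contra hne
  set t := (j - i).val
  have ht : 0 < t := ZMod.val_pos.mpr (sub_ne_zero.mpr (Ne.symm hne))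
  have htm : t < m := ZMod.val_lt _
  have hji : i + t = j := by rw [ZMod.natCast_zmod_val]; ring
  rcases Nat.even_or_odd t with he | ho
  · refine hw.false_of_walkLen (show WalkLen A 0 (w i) (w j) from hij) (r := m - t) ?_
      (by simpa using Nat.Odd.sub_even htm.le hw.odd he) (by omega)
    rw [Nat.cast_sub htm.le, ZMod.natCast_self, ← hji]
    ring
  · exact hw.false_of_walkLen (show WalkLen A 0 (w j) (w i) from hij.symm) hji
      (by simpa using ho) (by simpa using htm)

theorem ne_of_eq (hw : IsMinOddCycle A m w) {d : ℕ} (h0 : 0 < d) (hdm : d < m) {i j : ZMod m}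
    (h : j = i + d) : w i ≠ w j := by
  intro hij
  have hd : ((d : ℕ) : ZMod m) = 0 := by simpa [h] using hw.injective hij
  exact absurd (Nat.le_of_dvd h0 ((ZMod.natCast_eq_zero_iff _ _).mp hd)) (by omega)

theorem three_le (hw : IsMinOddCycle A m w) (hasym : Asymmetric' A) : 3 ≤ m := by
  rcases Nat.lt_or_ge m 3 with hm | hm
  · obtain rfl : m = 1 := by obtain ⟨k, rfl⟩ := hw.odd; omega
    have h := hw.adj 0
    rw [Subsingleton.elim (0 + 1 : ZMod 1) 0] at h
    exact absurd h (hasym _ _ h)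
  · exact hm

theorem exists_hasChord_of_adj (hw : IsMinOddCycle A m w) (hasym : Asymmetric' A)
    {a b : ZMod m} (hab : A (w a) (w b)) (hb : b ≠ a + 1) :
    ∃ e, Even e ∧ 2 ≤ e ∧ e + 3 ≤ m ∧ HasChord A w e := by
  have := hw.neZero
  set e := (b - a).val
  have hem : e < m := ZMod.val_lt _
  have hbe : b = a + e := by rw [ZMod.natCast_zmod_val]; ring
  have he0 : e ≠ 0 := by
    intro h
    rw [h, Nat.cast_zero, add_zero] at hbe
    exact hasym _ _ hab (hbe ▸ hab)
  have he1 : e ≠ 1 := fun h => hb (by rwa [h, Nat.cast_one] at hbe)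
  have he2 : e + 1 ≠ m := by
    intro h
    refine hasym _ _ hab (hw.adj_of_eq ?_)
    rw [hbe, add_assoc, ← Nat.cast_add_one, h, ZMod.natCast_self, add_zero]
  have heven : Even e := by
    by_contra hodd
    refine hw.not_adj_of_eq (d := m - e) (Nat.Odd.sub_odd hw.odd (Nat.not_even_iff_odd.mp hodd))
      (by omega) ?_ hab
    rw [Nat.cast_sub hem.le, ZMod.natCast_self, hbe]
    ring
  obtain ⟨k, hk⟩ := hw.odd
  obtain ⟨r, hr⟩ := heven
  exact ⟨e, ⟨r, hr⟩, by omega, by omega, hasChord_of_adj hab hbe⟩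

theorem digraphIso_of_forall_adj (hw : IsMinOddCycle A m w)
    (h : ∀ a b, A (w a) (w b) → b = a + 1) :
    DigraphIso (Induced A (Set.range w)) (Circ m ({1} : Set (ZMod m))) := by
  refine ⟨(Equiv.ofInjective w hw.injective).symm, ?_⟩
  rintro ⟨_, i, rfl⟩ ⟨_, j, rfl⟩
  simp only [Induced, Circ, Equiv.ofInjective_symm_apply, Set.mem_singleton_iff,
    sub_eq_iff_eq_add']
  exact ⟨h i j, hw.adj_of_eq⟩

theorem digraphIso_or_exists_hasChord (hw : IsMinOddCycle A m w) (hasym : Asymmetric' A) :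
    DigraphIso (Induced A (Set.range w)) (Circ m ({1} : Set (ZMod m))) ∨
      ∃ e, Even e ∧ 2 ≤ e ∧ e + 3 ≤ m ∧ HasChord A w e := by
  by_cases h : ∀ a b, A (w a) (w b) → b = a + 1
  · exact .inl (hw.digraphIso_of_forall_adj h)
  · push Not at h
    obtain ⟨a, b, hab, hb⟩ := h
    exact .inr (hw.exists_hasChord_of_adj hasym hab hb)

theorem false_of_adj_add_two (hw : IsMinOddCycle A m w) (hm : 5 ≤ m) {a b : ZMod m}
    (h₁ : A (w a) (w (a + 2))) (h₂ : A (w b) (w (b + 2))) (hb : b = a + 2) : False := by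
  subst hb
  refine hw.false_of_walkLen ((WalkLen.single h₁).trans (WalkLen.single h₂))
    (r := m - 4) ?_ ?_ (by omega)
  · rw [Nat.cast_sub (by omega), ZMod.natCast_self]
    push_cast
    ring
  · obtain ⟨k, rfl⟩ := hw.odd
    rw [Nat.odd_iff]
    omega

theorem eq_three_of_threeQuasiTransitive (hw : IsMinOddCycle A m w) (hasym : Asymmetric' A)
    (h3 : ThreeQuasiTransitive A) : m = 3 := by
  by_contra hne
  have hm : 5 ≤ m := by
    have := hw.three_le hasym
    obtain ⟨k, rfl⟩ := hw.odd
    omega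
  have back : ∀ i, A (w i) (w (i + -3)) := by
    intro i
    rcases h3 (w (i + -3)) (w (i + -3 + 1)) (w (i + -3 + 1 + 1)) (w i) (hw.adj _) (hw.adj _)
      (hw.adj_of_eq (by ring)) (hw.ne_of_eq (d := 3) (by norm_num) (by omega)
        (by push_cast; ring)) with h | h
    · refine absurd h (hw.not_adj_of_eq (d := m - 3) ?_ (by omega) ?_)
      · obtain ⟨k, rfl⟩ := hw.odd
        exact ⟨k - 1, by omega⟩
      · rw [Nat.cast_sub (by omega), ZMod.natCast_self]
        push_cast
        ring
    · exact h
  -- `⌈m/3⌉` backward jumps by 3 overshoot a full turn by at most two steps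
  have hj : m ≤ 3 * ((m + 2) / 3) := by omega
  refine hw.false_of_walkLen (walkLen_of_forall_adj_add back ((m + 2) / 3) 0)
    (r := 3 * ((m + 2) / 3) - m) ?_ ?_ (by omega)
  · rw [Nat.cast_sub hj, ZMod.natCast_self]
    push_cast
    ring
  · obtain ⟨k, rfl⟩ := hw.odd
    rw [Nat.odd_iff]
    omega

theorem not_hasChord_of_arcLocallyIn (hw : IsMinOddCycle A m w)
    (hA : ArcLocallyInSemicomplete A) {e : ℕ} (he : Even e) (h2 : 2 ≤ e) (hem : e + 3 ≤ m) :
    ¬ HasChord A w e := by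
  have base : ¬ HasChord A w 2 := by
    have shift : ∀ a, A (w a) (w (a + 2)) → A (w (a - 1)) (w (a - 1 + 2)) := by
      intro a ha
      rcases hA (w a) (w (a + 2)) (w (a - 1)) (w (a - 1 + 2)) ha (hw.adj_of_eq (by ring))
        (hw.adj_of_eq (by ring))
        (hw.ne_of_eq (d := 2) (by norm_num) (by omega) (by push_cast; ring)) with h | h
      · exact h
      · exact absurd h (hw.not_adj_of_eq (d := 2) even_two (by omega) (by push_cast; ring))
    rintro ⟨a, ha⟩
    push_cast at ha
    exact hw.false_of_adj_add_two (by omega) (shift _ (shift _ ha)) ha (by ring)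
  refine not_hasChord_of_step base (fun e he h0 hem ⟨a, ha⟩ => ?_) he h2 (by omega)
  rcases hA (w (a + e + 1)) (w (a + (e + 2 : ℕ))) (w (a + e)) (w a)
    (hw.adj_of_eq (by push_cast; ring)) (hw.adj _) ha
    (hw.ne_of_eq h0 (by omega) rfl).symm with h | h
  · exact absurd h (hw.not_adj_of_eq he (by omega) rfl)
  · exact ⟨a, h⟩

theorem not_hasChord_of_arcLocallyOut (hw : IsMinOddCycle A m w)
    (hA : ArcLocallyOutSemicomplete A) {e : ℕ} (he : Even e) (h2 : 2 ≤ e) (hem : e + 3 ≤ m) :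
    ¬ HasChord A w e := by
  have base : ¬ HasChord A w 2 := by
    have shift : ∀ a, A (w a) (w (a + 2)) → A (w (a + 1)) (w (a + 1 + 2)) := by
      intro a ha
      rcases hA (w a) (w (a + 2)) (w (a + 1)) (w (a + 1 + 2)) ha (hw.adj a)
        (hw.adj_of_eq (by ring))
        (hw.ne_of_eq (d := 2) (by norm_num) (by omega) (by push_cast; ring)) with h | h
      · exact h
      · exact absurd h (hw.not_adj_of_eq (d := 2) even_two (by omega) (by push_cast; ring))
    rintro ⟨a, ha⟩
    push_cast at ha
    exact hw.false_of_adj_add_two (by omega) ha (shift _ (shift _ ha)) (by ring)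
  refine not_hasChord_of_step base (fun e he h0 hem ⟨a, ha⟩ => ?_) he h2 (by omega)
  rcases hA (w a) (w (a + 1)) (w (a + (e + 2 : ℕ))) (w (a + 1 + 1)) (hw.adj a) ha (hw.adj _)
    (hw.ne_of_eq h0 (by omega) (by push_cast; ring)).symm with h | h
  · exact absurd h (hw.not_adj_of_eq he (by omega) (by push_cast; ring))
  · exact hasChord_of_adj h (by push_cast; ring)

theorem not_hasChord_of_threeAntiQuasiTransitive (hw : IsMinOddCycle A m w)
    (hA : ThreeAntiQuasiTransitive A) (hT : TT3Free A) {e : ℕ} (he : Even e) (h2 : 2 ≤ e)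
    (hem : e + 3 ≤ m) : ¬ HasChord A w e := by
  have base : ¬ HasChord A w 2 := by
    rintro ⟨a, ha⟩
    exact hT ⟨w a, w (a + 1), w (a + (2 : ℕ)),
      hw.ne_of_eq (d := 1) (by norm_num) (by omega) (by simp),
      hw.ne_of_eq (d := 1) (by norm_num) (by omega) (by push_cast; ring),
      hw.ne_of_eq (by norm_num) (by omega) rfl,
      hw.adj a, hw.adj_of_eq (by push_cast; ring), ha⟩
  refine not_hasChord_of_step base (fun e he h0 hem ⟨a, ha⟩ => ?_) he h2 (by omega)
  rcases hA (w (a + 1)) (w a) (w (a + (e + 2 : ℕ))) (w (a + 1 + e))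
    (hw.ne_of_eq (d := e + 1) (by omega) (by omega) (by push_cast; ring))
    (hw.ne_of_eq (d := e + 1) (by omega) (by omega) (by push_cast; ring))
    (hw.ne_of_eq h0 (by omega) rfl)
    (.inr ⟨hw.adj a, ha, hw.adj_of_eq (by push_cast; ring)⟩) with h | h
  · exact ⟨a + 1, h⟩
  · exact absurd h (hw.not_adj_of_eq he (by omega) rfl)

end IsMinOddCycle

theorem forall_odd_not_walkLen_of_threeQuasiTransitive (hasym : Asymmetric' A)
    (h3 : ThreeQuasiTransitive A)
    (hC₃ : ∀ S : Set V, ¬ DigraphIso (Induced A S) (Circ 3 ({1} : Set (ZMod 3)))) :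
    ∀ k u, Odd k → ¬ WalkLen A k u u := by
  intro k u hk hu
  obtain ⟨m, w, hw⟩ := exists_isMinOddCycle ⟨k, u, hk, hu⟩
  obtain rfl := hw.eq_three_of_threeQuasiTransitive hasym h3
  rcases hw.digraphIso_or_exists_hasChord hasym with hiso | ⟨e, -, he, hem, -⟩
  · exact hC₃ _ hiso
  · omega

theorem forall_odd_not_walkLen_of_arcLocallySemicomplete_or (hasym : Asymmetric' A)
    (hclass : ArcLocallyInSemicomplete A ∨ ArcLocallyOutSemicomplete A ∨
      (ThreeAntiQuasiTransitive A ∧ TT3Free A))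
    (hC : ∀ S : Set V, ¬ ∃ m : ℕ, Odd m ∧ 3 ≤ m ∧
      DigraphIso (Induced A S) (Circ m ({1} : Set (ZMod m)))) :
    ∀ k u, Odd k → ¬ WalkLen A k u u := by
  intro k u hk hu
  obtain ⟨m, w, hw⟩ := exists_isMinOddCycle ⟨k, u, hk, hu⟩
  rcases hw.digraphIso_or_exists_hasChord hasym with hiso | ⟨e, he, h2, hem, hc⟩
  · exact hC _ ⟨m, hw.odd, hw.three_le hasym, hiso⟩
  rcases hclass with hA | hA | ⟨hA, hT⟩
  · exact hw.not_hasChord_of_arcLocallyIn hA he h2 hem hc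
  · exact hw.not_hasChord_of_arcLocallyOut hA he h2 hem hc
  · exact hw.not_hasChord_of_threeAntiQuasiTransitive hA hT he h2 hem hc

end MinOddCycle

/-- KP characterizations for asymmetric generalized bipartite tournaments. -/
theorem stmt19 :
    (∀ (V : Type) [Fintype V] (A : V → V → Prop), Asymmetric' A → ThreeQuasiTransitive A →
      (IsKP A ↔ ∀ S : Set V, ¬ DigraphIso (Induced A S) (Circ 3 ({1} : Set (ZMod 3))))) ∧
    (∀ (V : Type) [Fintype V] (A : V → V → Prop), Asymmetric' A →
      (ArcLocallyInSemicomplete A ∨ ArcLocallyOutSemicomplete A ∨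
        (ThreeAntiQuasiTransitive A ∧ TT3Free A)) →
      (IsKP A ↔ ∀ S : Set V, ¬ ∃ m : ℕ, Odd m ∧ 3 ≤ m ∧
        DigraphIso (Induced A S) (Circ m ({1} : Set (ZMod m))))) := by
  refine ⟨fun V _ A hasym h3 => ⟨?_, ?_⟩, fun V _ A hasym hclass => ⟨?_, ?_⟩⟩
  · exact fun hkp _ hiso => not_isKP_of_digraphIso_circ (by decide) hiso hkp
  · exact fun hC₃ => isKP_of_forall_odd_not_walkLen
      (forall_odd_not_walkLen_of_threeQuasiTransitive hasym h3 hC₃)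
  · exact fun hkp _ ⟨_, hm, _, hiso⟩ => not_isKP_of_digraphIso_circ hm hiso hkp
  · exact fun hC => isKP_of_forall_odd_not_walkLen
      (forall_odd_not_walkLen_of_arcLocallySemicomplete_or hasym hclass hC)
end
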